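/- Let G be a finite non-abelian Cpo-group and let p be the largest prime divisor of |G|. Then |Cent(G)| = p + 2. -/

import Mathlib

/-- A group `G` is a Cpo-group if the centralizer of every non-trivial element
has prime order. -/
def IsCpoGroup (G : Type*) [Group G] : Prop :=
  ∀ x : G, x ≠ 1 → (Nat.card (Subgroup.centralizer ({x} : Set G))).Prime

/-- The number of distinct element centralizers of a group. -/
noncomputable def numCent (G : Type*) [Group G] : ℕ :=
  Set.ncard {H : Subgroup G | ∃ x : G, H = Subgroup.centralizer ({x} : Set G)}

/-!
In a Cpo-group the centralizer of `x ≠ 1` is `⟨x⟩`, so every non-trivial abelian subgroup has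
prime order; a Sylow subgroup lies in the centralizer of one of its central elements, hence is
cyclic. So `G` is a Z-group: its commutator subgroup `G'` is cyclic and has a complement of coprime
order, which is abelian as it meets `G'` trivially. For non-abelian `G` both are non-trivial,
so `|G| = p * r` with primes `r < p`. The centralizers are `G` and the subgroups of prime order,
i.e. the Sylow subgroups. There is one Sylow `p`-subgroup since `n_p ∣ r < p`, and `n_r = p`
because two non-trivial normal subgroups of a Cpo-group cannot meet trivially.
-/

open Subgroup

namespace Sylow

variable {G : Type*} [Group G] [Finite G] {p : ℕ} [Fact p.Prime]

theorem ncard_setOf_card_eq_pow :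
    {H : Subgroup G | Nat.card H = p ^ (Nat.card G).factorization p}.ncard =
      Nat.card (Sylow p G) := by
  rw [← Nat.card_coe_set_eq]
  exact Nat.card_congr
    { toFun := fun H => ofCard H.1 H.2
      invFun := fun P => ⟨P, P.card_eq_multiplicity⟩
      left_inv := fun _ => rfl
      right_inv := fun _ => Sylow.ext rfl }

theorem card_eq_of_card_eq_mul (P : Sylow p G) {m : ℕ} (hm : ¬ p ∣ m)
    (h : Nat.card G = p * m) : Nat.card P = p := by
  have hm0 : m ≠ 0 := by rintro rfl; exact hm (dvd_zero p)
  rw [P.card_eq_multiplicity, h, Nat.factorization_mul (Fact.out : p.Prime).ne_zero hm0,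
    Finsupp.add_apply, Nat.Prime.factorization_self Fact.out,
    Nat.factorization_eq_zero_of_not_dvd hm, pow_one]

theorem index_eq_of_card_eq_mul (P : Sylow p G) {m : ℕ} (hm : ¬ p ∣ m)
    (h : Nat.card G = p * m) : P.index = m := by
  have := card_mul_index P.1
  rw [P.card_eq_of_card_eq_mul hm h, h] at this
  exact Nat.eq_of_mul_eq_mul_left (Fact.out : p.Prime).pos this

theorem ncard_setOf_card_eq_of_card_eq_mul {m : ℕ} (hm : ¬ p ∣ m) (h : Nat.card G = p * m) :
    {H : Subgroup G | Nat.card H = p}.ncard = Nat.card (Sylow p G) := by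
  obtain ⟨P⟩ : Nonempty (Sylow p G) := inferInstance
  rw [← ncard_setOf_card_eq_pow, ← P.card_eq_multiplicity, P.card_eq_of_card_eq_mul hm h]

theorem card_eq_one_of_index_lt (P : Sylow p G) (h : P.index < p) : Nat.card (Sylow p G) = 1 := by
  have hmod : Nat.card (Sylow p G) % p = 1 % p := card_sylow_modEq_one p G
  have hlt := (Nat.le_of_dvd P.index_ne_zero_of_finite.bot_lt P.card_dvd_index).trans_lt h
  rwa [Nat.mod_eq_of_lt hlt, Nat.mod_eq_of_lt (Fact.out : p.Prime).one_lt] at hmod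

end Sylow

namespace IsCpoGroup

variable {G : Type*} [Group G]

theorem centralizer_eq_zpowers (hG : IsCpoGroup G) {x : G} (hx : x ≠ 1) :
    centralizer {x} = zpowers x := by
  have hprime := hG x hx
  have : Finite (centralizer ({x} : Set G)) := Nat.finite_of_card_ne_zero hprime.ne_zero
  have hle : zpowers x ≤ centralizer {x} := zpowers_le.mpr (mem_centralizer_singleton_iff.mpr rfl)
  refine (eq_of_le_of_card_ge hle ?_).symm
  rw [(Nat.dvd_prime hprime).mp (card_dvd_of_le hle) |>.resolve_left ?_]
  rwa [Nat.card_zpowers, orderOf_eq_one_iff]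

theorem card_prime_of_le_centralizer (hG : IsCpoGroup G) {H : Subgroup G}
    (hH : H ≤ centralizer H) (hbot : H ≠ ⊥) : (Nat.card H).Prime := by
  obtain ⟨h, hh, hne⟩ := H.bot_or_exists_ne_one.resolve_left hbot
  have hle : H ≤ zpowers h :=
    hG.centralizer_eq_zpowers hne ▸ hH.trans (centralizer_le (Set.singleton_subset_iff.mpr hh))
  rw [le_antisymm hle (zpowers_le.mpr hh), ← hG.centralizer_eq_zpowers hne]
  exact hG h hne

theorem eq_centralizer_of_card_prime (hG : IsCpoGroup G) {H : Subgroup G}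
    (hH : (Nat.card H).Prime) : ∃ x, H = centralizer {x} := by
  have : Fact (Nat.card H).Prime := ⟨hH⟩
  have : Finite H := Nat.finite_of_card_ne_zero hH.ne_zero
  obtain ⟨h, hh, hne⟩ := H.bot_or_exists_ne_one.resolve_left
    (fun h => hH.ne_one (by rw [h, card_bot]))
  refine ⟨h, le_antisymm ?_ ?_⟩
  · have : IsCyclic H := isCyclic_of_prime_card rfl
    exact (le_centralizer (H := H)).trans (centralizer_le (Set.singleton_subset_iff.mpr hh))
  · exact hG.centralizer_eq_zpowers hne ▸ zpowers_le.mpr hh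

theorem setOf_exists_eq_centralizer (hG : IsCpoGroup G) :
    {H : Subgroup G | ∃ x : G, H = centralizer {x}} =
      insert ⊤ {H : Subgroup G | (Nat.card H).Prime} := by
  ext H
  have htop : centralizer ({1} : Set G) = ⊤ :=
    eq_top_iff.mpr fun g _ => mem_centralizer_singleton_iff.mpr (by simp)
  simp only [Set.mem_ofPred_eq, Set.mem_insert_iff]
  constructor
  · rintro ⟨x, rfl⟩
    by_cases hx : x = 1
    · exact .inl (hx ▸ htop)
    · exact .inr (hG x hx)
  · rintro (rfl | hH)
    · exact ⟨1, htop.symm⟩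
    · exact hG.eq_centralizer_of_card_prime hH

theorem eq_bot_or_eq_bot_of_disjoint (hG : IsCpoGroup G) {N M : Subgroup G} [N.Normal] [M.Normal]
    (h : Disjoint N M) : N = ⊥ ∨ M = ⊥ := by
  refine or_iff_not_imp_left.mpr fun hN => (eq_bot_iff_forall M).mpr fun y hy => ?_
  obtain ⟨x, hx, hne⟩ := N.bot_or_exists_ne_one.resolve_left hN
  have hxy := commute_of_normal_of_disjoint N M ‹_› ‹_› h x y hx hy
  have hyx : y ∈ zpowers x :=
    hG.centralizer_eq_zpowers hne ▸ mem_centralizer_singleton_iff.mpr hxy.eq.symm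
  exact (disjoint_def.mp h) (zpowers_le.mpr hx hyx) hy

variable [Finite G]

theorem isZGroup (hG : IsCpoGroup G) : IsZGroup G := by
  refine ⟨fun q hq P => ?_⟩
  have : Fact q.Prime := ⟨hq⟩
  rcases subsingleton_or_nontrivial P with hP | hP
  · exact isCyclic_of_subsingleton
  obtain ⟨z, hz, hne⟩ := (center P).bot_or_exists_ne_one.resolve_left
    (nontrivial_iff_ne_bot _ |>.mp P.isPGroup'.center_nontrivial)
  have hz' : (z : G) ≠ 1 := by simpa using hne
  have hle : P.1 ≤ zpowers (z : G) := hG.centralizer_eq_zpowers hz' ▸ fun g hg =>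
    mem_centralizer_singleton_iff.mpr (congrArg Subtype.val (mem_center_iff.mp hz ⟨g, hg⟩))
  exact isCyclic_of_le hle

theorem exists_card_eq_mul (hG : IsCpoGroup G) (hna : ¬ IsMulCommutative G) :
    ∃ q r : ℕ, q.Prime ∧ r.Prime ∧ q ≠ r ∧ Nat.card G = q * r := by
  have := hG.isZGroup
  have hcomm : commutator G ≤ centralizer (commutator G) :=
    have := IsZGroup.isCyclic_commutator G
    le_centralizer _
  have hq := hG.card_prime_of_le_centralizer hcomm ((commutator_eq_bot_iff G).not.mpr hna)
  obtain ⟨H, hH⟩ := exists_right_complement'_of_coprime (IsZGroup.coprime_commutator_index G)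
  have hHcomm : H ≤ centralizer H := fun a ha => mem_centralizer_iff.mpr fun b hb =>
    commutatorElement_eq_one_iff_mul_comm.mp <| disjoint_def.mp hH.disjoint
      (commutator_mem_commutator (mem_top b) (mem_top a))
      (commutator_le_self H (commutator_mem_commutator hb ha))
  have hHbot : H ≠ ⊥ := by
    rintro rfl
    have htop := isComplement'_bot_right.mp hH
    refine hna (isMulCommutative_iff.mpr fun a b => ?_)
    exact mem_centralizer_iff.mp (hcomm (htop ▸ mem_top b)) a (htop ▸ mem_top a)
  have hr := hG.card_prime_of_le_centralizer hHcomm hHbot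
  refine ⟨_, _, hq, hr, ?_, hH.card_mul_card.symm⟩
  rw [← Nat.coprime_primes hq hr, ← hH.symm.index_eq_card]
  exact IsZGroup.coprime_commutator_index G

theorem card_sylow_eq_of_card_eq_mul (hG : IsCpoGroup G) {p r : ℕ} [hp : Fact p.Prime]
    [hr : Fact r.Prime] (hrp : r < p) (hcard : Nat.card G = p * r) :
    Nat.card (Sylow r G) = p := by
  have hpr : ¬ p ∣ r := fun h => (Nat.le_of_dvd hr.out.pos h).not_gt hrp
  have hrp' : ¬ r ∣ p := fun h => hrp.ne ((Nat.prime_dvd_prime_iff_eq hr.out hp.out).mp h)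
  have hcard' : Nat.card G = r * p := hcard.trans (mul_comm p r)
  obtain ⟨P⟩ : Nonempty (Sylow p G) := inferInstance
  obtain ⟨R⟩ : Nonempty (Sylow r G) := inferInstance
  refine (hp.out.eq_one_or_self_of_dvd _ ?_).resolve_left fun hnr => ?_
  · exact R.index_eq_of_card_eq_mul hrp' hcard' ▸ R.card_dvd_index
  have hnp := P.card_eq_one_of_index_lt ((P.index_eq_of_card_eq_mul hpr hcard).trans_lt hrp)
  have : Subsingleton (Sylow p G) := (Nat.card_eq_one_iff_unique.mp hnp).1
  have : Subsingleton (Sylow r G) := (Nat.card_eq_one_iff_unique.mp hnr).1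
  have := P.normal_of_subsingleton
  have := R.normal_of_subsingleton
  have hPc := P.card_eq_of_card_eq_mul hpr hcard
  have hRc := R.card_eq_of_card_eq_mul hrp' hcard'
  have hdisj : Disjoint P.1 R.1 := disjoint_of_coprime_natCard <| by
    rw [hPc, hRc, Nat.coprime_primes hp.out hr.out]
    exact hrp.ne'
  rcases hG.eq_bot_or_eq_bot_of_disjoint hdisj with hP | hR
  · exact hp.out.ne_one (hPc ▸ hP ▸ card_bot)
  · exact hr.out.ne_one (hRc ▸ hR ▸ card_bot)

theorem numCent_eq_of_card_eq_mul (hG : IsCpoGroup G) {p r : ℕ} [hp : Fact p.Prime]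
    [hr : Fact r.Prime] (hrp : r < p) (hcard : Nat.card G = p * r) : numCent G = p + 2 := by
  have hpr : ¬ p ∣ r := fun h => (Nat.le_of_dvd hr.out.pos h).not_gt hrp
  have hrp' : ¬ r ∣ p := fun h => hrp.ne ((Nat.prime_dvd_prime_iff_eq hr.out hp.out).mp h)
  obtain ⟨P⟩ : Nonempty (Sylow p G) := inferInstance
  have hnp := P.card_eq_one_of_index_lt ((P.index_eq_of_card_eq_mul hpr hcard).trans_lt hrp)
  have hset : {H : Subgroup G | (Nat.card H).Prime} =
      {H : Subgroup G | Nat.card H = p} ∪ {H | Nat.card H = r} := by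
    ext H
    simp only [Set.mem_ofPred_eq, Set.mem_union]
    refine ⟨fun hH => ?_, by rintro (h | h) <;> exact h ▸ Fact.out⟩
    rcases hH.dvd_mul.mp (hcard ▸ card_subgroup_dvd_card H) with h | h
    · exact .inl ((Nat.prime_dvd_prime_iff_eq hH hp.out).mp h)
    · exact .inr ((Nat.prime_dvd_prime_iff_eq hH hr.out).mp h)
  have htop : ⊤ ∉ {H : Subgroup G | (Nat.card H).Prime} := by
    simpa [card_top, hcard] using Nat.not_prime_mul hp.out.ne_one hr.out.ne_one
  have hdisj : Disjoint {H : Subgroup G | Nat.card H = p} {H | Nat.card H = r} :=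
    Set.disjoint_left.mpr fun H hHp hHr => hrp.ne (hHr.symm.trans hHp)
  rw [numCent, hG.setOf_exists_eq_centralizer, Set.ncard_insert_of_notMem htop, hset,
    Set.ncard_union_eq hdisj, Sylow.ncard_setOf_card_eq_of_card_eq_mul hpr hcard,
    Sylow.ncard_setOf_card_eq_of_card_eq_mul hrp' (hcard.trans (mul_comm p r)), hnp,
    hG.card_sylow_eq_of_card_eq_mul hrp hcard]
  omega

end IsCpoGroup

theorem stmt_13 (G : Type*) [Group G] [Finite G] (hG : IsCpoGroup G)
    (hna : ¬ ∀ a b : G, a * b = b * a)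
    (p : ℕ) (hp : p.Prime) (hdvd : p ∣ Nat.card G)
    (hmax : ∀ q : ℕ, q.Prime → q ∣ Nat.card G → q ≤ p) :
    numCent G = p + 2 := by
  obtain ⟨q, r, hq, hr, hqr, hcard⟩ := hG.exists_card_eq_mul (isMulCommutative_iff.not.mpr hna)
  have hq_le := hmax q hq (hcard ▸ dvd_mul_right q r)
  have hr_le := hmax r hr (hcard ▸ dvd_mul_left r q)
  have : Fact p.Prime := ⟨hp⟩
  rcases (Nat.Prime.dvd_mul hp).mp (hcard ▸ hdvd) with h | h
  · obtain rfl := (Nat.prime_dvd_prime_iff_eq hp hq).mp h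
    have : Fact r.Prime := ⟨hr⟩
    exact hG.numCent_eq_of_card_eq_mul (hr_le.lt_of_ne hqr.symm) hcard
  · obtain rfl := (Nat.prime_dvd_prime_iff_eq hp hr).mp h
    have : Fact q.Prime := ⟨hq⟩
    exact hG.numCent_eq_of_card_eq_mul (hq_le.lt_of_ne hqr) (hcard.trans (mul_comm q p))
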